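/- arXiv:2504.07617 — 5 statements merged into one kernel-verified Lean document; each statement's English description precedes it below -/
import Mathlib

section
/- Let a, b, c ∈ ℂ with a ≠ 0 and Im c > 0, Im b > 0. The function φ(z) = a/(z+c) + b maps ℂ₊ into ℂ₊ if and only if |a| + Re a ≤ 2·(Im b)·(Im c). -/
/-!
For `Im w > 0` one has `2 Im w · Im (a / w) ≥ -(‖a‖ + Re a)`: multiplied by `|w|²` this is
`‖a‖ |w|² + Re (conj a · w²) ≥ 0`. The bound is attained on every horizontal line `Im w = y`
when `‖a‖ + Re a > 0`. Hence, writing `w = z + c`, the map `φ` sends `ℂ₊` into `ℂ₊` iff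
`Im b ≥ (‖a‖ + Re a) / (2 y)` for all `y > Im c`, i.e. iff `‖a‖ + Re a ≤ 2 Im b · Im c`.
-/

open Complex ComplexConjugate

namespace Complex

theorem neg_norm_add_re_le_two_mul_im_mul_im_div (a w : ℂ) :
    -(‖a‖ + a.re) ≤ 2 * w.im * (a / w).im := by
  rcases eq_or_ne w 0 with rfl | hw
  · simpa [neg_le] using (abs_le.1 (abs_re_le_norm a)).1
  have hconj : 0 ≤ ‖a‖ * normSq w + (conj a * w ^ 2).re := by
    have h := re_le_norm (-(conj a * w ^ 2))
    rw [norm_neg, norm_mul, norm_pow, norm_conj, ← normSq_eq_norm_sq, neg_re] at h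
    linarith
  have hN := normSq_pos.2 hw
  have hid : normSq w * (2 * w.im * (a / w).im + (‖a‖ + a.re))
      = ‖a‖ * normSq w + (conj a * w ^ 2).re := by
    rw [div_im]
    field_simp
    simp only [normSq_apply, mul_re, mul_im, conj_re, conj_im, pow_two]
    ring
  nlinarith

/-- The witness is `w = I y u / Re u` with `u = ‖a‖ + a`; it works because `u² = 2 (Re u) a`,
so that `a / w = -I u / (2 y)`. -/
theorem exists_im_eq_and_im_div_eq (a : ℂ) (ha : 0 < ‖a‖ + a.re) {y : ℝ} (hy : y ≠ 0) :
    ∃ w : ℂ, w.im = y ∧ (a / w).im = -(‖a‖ + a.re) / (2 * y) := by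
  set s := ‖a‖ + a.re
  set u : ℂ := ‖a‖ + a with hu_def
  have hu : u.re = s := by simp [u, s]
  have hsq : u ^ 2 = 2 * s * a := by
    have h1 : (‖a‖ : ℂ) ^ 2 = a * conj a := by
      rw [mul_conj, normSq_eq_norm_sq]; push_cast; ring
    have h2 : a + conj a = 2 * a.re := by rw [add_conj]; push_cast; ring
    simp only [hu_def, s]
    push_cast
    linear_combination h1 + a * h2
  clear_value u s
  have hs : (s : ℂ) ≠ 0 := by exact_mod_cast ha.ne'
  have hy' : (y : ℂ) ≠ 0 := by exact_mod_cast hy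
  refine ⟨I * (y * u) / s, ?_, ?_⟩
  · rw [div_ofReal_im, I_mul_im, re_ofReal_mul, hu, mul_div_cancel_right₀ _ ha.ne']
  · have hdiv : a / (I * (y * u) / s) = -(u / (2 * y : ℝ) * I) := by
      have hu0 : u ≠ 0 := fun h => by rw [h, zero_re] at hu; linarith
      push_cast
      field_simp
      linear_combination (-1) * hsq + u ^ 2 * I_sq
    rw [hdiv, neg_im, mul_I_im, div_ofReal_re, hu, neg_div]

end Complex

theorem linear_fractional_endofunction_iff_general (a b c : ℂ)
    (hc : 0 < c.im) (hb : 0 < b.im) :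
    (∀ z : ℂ, 0 < z.im → 0 < (a / (z + c) + b).im) ↔
      ‖a‖ + a.re ≤ 2 * b.im * c.im := by
  constructor
  · intro hφ
    by_contra! hlt
    set y := (‖a‖ + a.re) / (2 * b.im)
    have hcy : c.im < y := by rw [lt_div_iff₀ (by positivity)]; linarith
    have hs : 0 < ‖a‖ + a.re := (mul_pos (mul_pos two_pos hb) hc).trans hlt
    have hyb : (‖a‖ + a.re) / (2 * y) = b.im := by simp only [y]; field_simp
    obtain ⟨w, hw, hdiv⟩ := exists_im_eq_and_im_div_eq a hs (hc.trans hcy).ne'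
    have hpos := hφ (w - c) (by simpa [hw] using hcy)
    rw [sub_add_cancel, add_im, hdiv, neg_div, hyb, neg_add_cancel] at hpos
    exact hpos.false
  · intro hle z hz
    have hbound := neg_norm_add_re_le_two_mul_im_mul_im_div a (z + c)
    simp only [add_im] at hbound ⊢
    refine pos_of_mul_pos_right (a := z.im + c.im) ?_ (add_pos hz hc).le
    nlinarith

theorem linear_fractional_endofunction_iff (a b c : ℂ) (ha : a ≠ 0)
    (hc : 0 < c.im) (hb : 0 < b.im) :
    (∀ z : ℂ, 0 < z.im → 0 < (a / (z + c) + b).im) ↔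
      ‖a‖ + a.re ≤ 2 * b.im * c.im :=
  linear_fractional_endofunction_iff_general a b c hc hb
end

section
/- For Im c > 0 and a ∈ ℂ, the image of ℂ₊ under the map z ↦ a/(z+c) is the open disk of radius |a|/(2·Im c) centered at -i·a/(2·Im c), minus possibly its center if one excludes the point at infinity; in particular {a/(z+c) : z ∈ ℂ₊} is contained in the closed disk of radius |a|/(2 Im c) centered at -ia/(2 Im c). -/
/-! Translation by `c` carries `ℂ₊` onto the half-plane `Im u > Im c`, and `u ↦ a / u` is an
involution of `ℂ`. Writing `m = Im c`, the point `a / u` lies in the disk exactly when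
`‖u - 2 m i‖ < ‖u‖`, i.e. when `u` is closer to `2 m i` than to `0`, i.e. when `Im u > m`.
-/

open Complex Metric

theorem image_add_right_setOf_im_pos (c : ℂ) :
    (· + c) '' {z : ℂ | 0 < z.im} = {u : ℂ | c.im < u.im} := by
  ext u
  simp [Set.image_add_right]

theorem norm_sub_two_mul_I_lt_norm_iff {m : ℝ} (hm : 0 < m) (u : ℂ) :
    ‖u - 2 * m * I‖ < ‖u‖ ↔ m < u.im := by
  rw [← sq_lt_sq₀ (norm_nonneg _) (norm_nonneg _), Complex.sq_norm, Complex.sq_norm]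
  simp only [normSq_apply, sub_re, mul_re, re_ofNat, ofReal_re, im_ofNat, ofReal_im, mul_zero,
    sub_zero, I_re, mul_im, zero_mul, add_zero, I_im, mul_one, sub_self, sub_im,
    add_lt_add_iff_left]
  constructor <;> intro h <;> nlinarith

theorem dist_div_neg_I_mul_div {a u : ℂ} (hu : u ≠ 0) {m : ℝ} (hm : 0 < m) :
    dist (a / u) (-I * a / (2 * m)) = ‖a‖ / (2 * m) * (‖u - 2 * m * I‖ / ‖u‖) := by
  have hm' : (m : ℂ) ≠ 0 := ofReal_ne_zero.2 hm.ne'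
  have hsub : a / u - -I * a / (2 * m) = I * a * (u - 2 * m * I) / (2 * m * u) := by
    field_simp
    ring_nf
    simp [I_sq]
  rw [dist_eq, hsub, norm_div, norm_mul, norm_mul, norm_mul, norm_mul, norm_I, Complex.norm_two,
    norm_real, Real.norm_of_nonneg hm.le]
  ring

theorem image_div_setOf_lt_im_eq_ball {a : ℂ} (ha : a ≠ 0) {m : ℝ} (hm : 0 < m) :
    (fun u => a / u) '' {u : ℂ | m < u.im} = ball (-I * a / (2 * m)) (‖a‖ / (2 * m)) := by
  have hinv : Function.Involutive (fun u : ℂ => a / u) := fun u => div_div_cancel₀ ha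
  rw [hinv.image_eq_preimage_symm]
  ext w
  rcases eq_or_ne w 0 with rfl | hw
  -- `a / 0 = 0` lies outside the half-plane, and `0` lies on the boundary circle.
  · simp [dist_eq, abs_of_pos hm, hm.not_gt]
  · have hu : a / w ≠ 0 := div_ne_zero ha hw
    rw [Set.mem_preimage, Set.mem_ofPred_eq, mem_ball, ← norm_sub_two_mul_I_lt_norm_iff hm,
      ← div_lt_one (norm_pos_iff.2 hu),
      ← mul_lt_iff_lt_one_right (by positivity : 0 < ‖a‖ / (2 * m)),
      ← dist_div_neg_I_mul_div hu hm, div_div_cancel₀ ha]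

theorem image_of_inversion_is_disk (a c : ℂ) (ha : a ≠ 0) (hc : 0 < c.im) :
    ((fun z : ℂ => a / (z + c)) '' {z : ℂ | 0 < z.im} =
        Metric.ball (-Complex.I * a / (2 * c.im)) (‖a‖ / (2 * c.im)) ∨
      (fun z : ℂ => a / (z + c)) '' {z : ℂ | 0 < z.im} =
        Metric.ball (-Complex.I * a / (2 * c.im)) (‖a‖ / (2 * c.im)) \
          {-Complex.I * a / (2 * c.im)}) ∧
    (fun z : ℂ => a / (z + c)) '' {z : ℂ | 0 < z.im} ⊆
      Metric.closedBall (-Complex.I * a / (2 * c.im)) (‖a‖ / (2 * c.im)) := by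
  have himage : (fun z : ℂ => a / (z + c)) '' {z : ℂ | 0 < z.im} =
      ball (-I * a / (2 * c.im)) (‖a‖ / (2 * c.im)) := by
    rw [show (fun z : ℂ => a / (z + c)) = (fun u => a / u) ∘ (· + c) from rfl, Set.image_comp,
      image_add_right_setOf_im_pos, image_div_setOf_lt_im_eq_ball ha hc]
  exact ⟨Or.inl himage, himage ▸ ball_subset_closedBall⟩
end

section
/- Let λ be a finite signed Borel measure on ℝ, α, β ∈ ℝ, c ∈ ℝ, and φ(z) = α + β z + ∫_ℝ (1+sz)/(s−z) dλ(s) for z ∈ ℂ₊. Then lim_{y → 0⁺} y · φ(c + i y) = i (1 + c²) λ({c}). -/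
/-!
Since `(1 + s z) / (s - z) = (1 + z²) / (s - z) + z`, it suffices to find the limit of
`y ∫ (s - c - i y)⁻¹ dμ(s)` for a finite measure `μ`. The integrand `y / (s - c - i y)` has
modulus at most `1` and tends to `i` at `s = c` and to `0` elsewhere, so by dominated convergence
the limit is `i μ({c})`. All other terms of `y φ(c + i y)` carry a factor `y` and vanish.
-/

open MeasureTheory Filter Topology Complex

lemma Complex.im_le_norm_ofReal_sub {z : ℂ} (hz : 0 < z.im) (s : ℝ) : z.im ≤ ‖(s : ℂ) - z‖ := by
  simpa [abs_of_pos hz] using abs_im_le_norm ((s : ℂ) - z)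

lemma Complex.ofReal_sub_ne_zero {z : ℂ} (hz : 0 < z.im) (s : ℝ) : (s : ℂ) - z ≠ 0 :=
  norm_pos_iff.mp (hz.trans_le (im_le_norm_ofReal_sub hz s))

lemma tendsto_ofReal_add_mul_I_nhdsGT (c : ℝ) :
    Tendsto (fun y : ℝ => (c : ℂ) + y * I) (𝓝[>] 0) (𝓝 c) := by
  have : Continuous fun y : ℝ => (c : ℂ) + y * I := by fun_prop
  simpa using (this.tendsto 0).mono_left nhdsWithin_le_nhds

lemma tendsto_ofReal_nhdsGT_zero : Tendsto (fun y : ℝ => (y : ℂ)) (𝓝[>] 0) (𝓝 0) := by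
  simpa using (continuous_ofReal.tendsto 0).mono_left nhdsWithin_le_nhds

lemma tendsto_mul_inv_ofReal_sub (c s : ℝ) :
    Tendsto (fun y : ℝ => (y : ℂ) * ((s : ℂ) - (c + y * I))⁻¹) (𝓝[>] 0)
      (𝓝 (({c} : Set ℝ).indicator (fun _ => I) s)) := by
  by_cases hs : s = c
  · subst hs
    rw [Set.indicator_of_mem (Set.mem_singleton s)]
    refine tendsto_const_nhds.congr' ?_
    filter_upwards [self_mem_nhdsWithin] with y (hy : 0 < y)
    have : (y : ℂ) ≠ 0 := ofReal_ne_zero.mpr hy.ne'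
    field_simp
    ring_nf
    simp
  · rw [Set.indicator_of_notMem (by simpa using hs)]
    have hne : (s : ℂ) - (c + (0 : ℝ) * I) ≠ 0 := by simpa [sub_eq_zero] using hs
    have : ContinuousAt (fun y : ℝ => (y : ℂ) * ((s : ℂ) - (c + y * I))⁻¹) 0 := by
      fun_prop (disch := exact hne)
    simpa using this.tendsto.mono_left nhdsWithin_le_nhds

section

variable (μ : Measure ℝ) [IsFiniteMeasure μ]

lemma integrable_inv_ofReal_sub {z : ℂ} (hz : 0 < z.im) :
    Integrable (fun s : ℝ => ((s : ℂ) - z)⁻¹) μ := by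
  refine (integrable_const (z.im)⁻¹).mono' ?_ (Eventually.of_forall fun s => ?_)
  · exact ((continuous_ofReal.sub continuous_const).inv₀
      (ofReal_sub_ne_zero hz)).aestronglyMeasurable
  · rw [norm_inv]
    exact inv_anti₀ hz (im_le_norm_ofReal_sub hz s)

lemma integral_one_add_mul_div_ofReal_sub {z : ℂ} (hz : 0 < z.im) :
    ∫ s : ℝ, (1 + (s : ℂ) * z) / ((s : ℂ) - z) ∂μ
      = (1 + z ^ 2) * ∫ s : ℝ, ((s : ℂ) - z)⁻¹ ∂μ + z * μ.real Set.univ := by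
  have hsplit (s : ℝ) :
      (1 + (s : ℂ) * z) / ((s : ℂ) - z) = (1 + z ^ 2) * ((s : ℂ) - z)⁻¹ + z := by
    field_simp [ofReal_sub_ne_zero hz s]
    ring
  simp_rw [hsplit]
  rw [integral_add ((integrable_inv_ofReal_sub μ hz).const_mul _) (integrable_const z),
    integral_const_mul, integral_const, real_smul, mul_comm z]

lemma tendsto_mul_integral_inv_ofReal_sub (c : ℝ) :
    Tendsto (fun y : ℝ => (y : ℂ) * ∫ s : ℝ, ((s : ℂ) - (c + y * I))⁻¹ ∂μ) (𝓝[>] 0)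
      (𝓝 (I * μ.real {c})) := by
  have hlim : I * μ.real {c} = ∫ s : ℝ, ({c} : Set ℝ).indicator (fun _ => I) s ∂μ := by
    rw [integral_indicator_const _ (measurableSet_singleton c), real_smul, mul_comm]
  simp_rw [← integral_const_mul]
  rw [hlim]
  refine tendsto_integral_filter_of_dominated_convergence (fun _ => 1) ?_ ?_
    (integrable_const 1) (Eventually.of_forall (tendsto_mul_inv_ofReal_sub c))
  · filter_upwards [self_mem_nhdsWithin] with y (hy : 0 < y)
    exact ((integrable_inv_ofReal_sub μ (by simpa using hy)).const_mul _).aestronglyMeasurable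
  · filter_upwards [self_mem_nhdsWithin] with y (hy : 0 < y)
    refine Eventually.of_forall fun s => ?_
    have hy' : 0 < ((c : ℂ) + y * I).im := by simpa using hy
    have hle := im_le_norm_ofReal_sub hy' s
    rw [norm_mul, norm_inv, norm_real, Real.norm_of_nonneg hy.le, ← div_eq_mul_inv,
      div_le_one (hy'.trans_le hle)]
    simpa using hle

lemma tendsto_mul_integral_one_add_mul_div_ofReal_sub (c : ℝ) :
    Tendsto (fun y : ℝ => (y : ℂ) *
        ∫ s : ℝ, (1 + (s : ℂ) * (c + y * I)) / ((s : ℂ) - (c + y * I)) ∂μ) (𝓝[>] 0)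
      (𝓝 (I * (1 + (c : ℂ) ^ 2) * μ.real {c})) := by
  have hz := tendsto_ofReal_add_mul_I_nhdsGT c
  have hy0 := tendsto_ofReal_nhdsGT_zero
  have hlim := ((tendsto_const_nhds (x := (1 : ℂ))).add (hz.pow 2)).mul
    (tendsto_mul_integral_inv_ofReal_sub μ c) |>.add ((hy0.mul hz).mul_const (μ.real Set.univ : ℂ))
  rw [zero_mul, zero_mul, add_zero, ← mul_assoc, mul_comm _ I] at hlim
  refine hlim.congr' ?_
  filter_upwards [self_mem_nhdsWithin] with y (hy : 0 < y)
  rw [integral_one_add_mul_div_ofReal_sub μ (by simpa using hy)]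
  ring

end

theorem mass_at_point (α β c : ℝ) (lam1 lam2 : Measure ℝ)
    [IsFiniteMeasure lam1] [IsFiniteMeasure lam2] (φ : ℂ → ℂ)
    (hφ : ∀ z : ℂ, 0 < z.im →
      φ z = (α : ℂ) + (β : ℂ) * z +
        ((∫ s : ℝ, (1 + (s : ℂ) * z) / ((s : ℂ) - z) ∂lam1) -
          ∫ s : ℝ, (1 + (s : ℂ) * z) / ((s : ℂ) - z) ∂lam2)) :
    Tendsto (fun y : ℝ => (y : ℂ) * φ ((c : ℂ) + (y : ℂ) * Complex.I))
      (nhdsWithin 0 (Set.Ioi 0))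
      (nhds (Complex.I * (1 + (c : ℂ) ^ 2) *
        (((lam1 {c}).toReal - (lam2 {c}).toReal : ℝ) : ℂ))) := by
  have hy0 := tendsto_ofReal_nhdsGT_zero
  have hlim := ((hy0.mul_const (α : ℂ)).add ((hy0.mul_const (β : ℂ)).mul
    (tendsto_ofReal_add_mul_I_nhdsGT c))).add
    ((tendsto_mul_integral_one_add_mul_div_ofReal_sub lam1 c).sub
      (tendsto_mul_integral_one_add_mul_div_ofReal_sub lam2 c))
  rw [zero_mul, zero_mul, zero_mul, zero_add, zero_add, ← mul_sub] at hlim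
  push_cast
  refine hlim.congr' ?_
  filter_upwards [self_mem_nhdsWithin] with y (hy : 0 < y)
  rw [hφ _ (by simpa using hy)]
  ring
end

section
/- For x ∈ ℝ and y > 0, sup_{s ∈ ℝ} (1 + s²)/((s − x)² + y²) = (x²+y²+1)/(2y²) + √(((x²+y²+1)/(2y²))² − 1/y²), and this supremum is at most 1 + (1 + x²)/y². -/
/-!
Put `A = x² + y² + 1` and `q(t) = y² t² - A t + 1`; the claimed supremum `M` is the larger root
of `q`. Everything follows from the identity
`(t - 1) (t ((s - x)² + y²) - (1 + s²)) = ((t - 1) s - t x)² + q(t)`: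
for `t > M` we have `t > 1` and `q(t) > 0`, so the ratio stays below `t`; for `M > 1` it attains
`M` at `s = M x / (M - 1)`, and when `M = 1` it tends to `1` at infinity.
Finally `M (y² M - A) = -1 < 0` gives `M < A / y²`.
-/

open Filter Topology

theorem quadratic_eq_zero_of_eq_add_sqrt {a b c r : ℝ} (ha : 0 < a)
    (hd : c / a ≤ (b / (2 * a)) ^ 2)
    (hr : r = b / (2 * a) + Real.sqrt ((b / (2 * a)) ^ 2 - c / a)) :
    a * r ^ 2 - b * r + c = 0 := by
  set p := b / (2 * a) with hp
  set D := p ^ 2 - c / a with hD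
  have hsq : Real.sqrt D ^ 2 = D := Real.sq_sqrt (sub_nonneg.mpr hd)
  have hb : b = 2 * a * p := by rw [hp]; field_simp
  have hc : c = a * (p ^ 2 - D) := by rw [hD]; field_simp; ring
  rw [hr, hb, hc]
  linear_combination a * hsq

theorem quadratic_pos_of_root_lt {a b c r t : ℝ} (ha : 0 < a) (hr : a * r ^ 2 - b * r + c = 0)
    (hvertex : b / (2 * a) ≤ r) (hrt : r < t) :
    0 < a * t ^ 2 - b * t + c := by
  rw [div_le_iff₀ (by positivity)] at hvertex
  have hfactor : a * t ^ 2 - b * t + c = (t - r) * (a * (t + r) - b) := by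
    linear_combination hr
  rw [hfactor]
  exact mul_pos (sub_pos.mpr hrt) (by nlinarith)

theorem poisson_ratio_identity (x y s t : ℝ) :
    (t - 1) * (t * ((s - x) ^ 2 + y ^ 2) - (1 + s ^ 2)) =
      ((t - 1) * s - t * x) ^ 2 + (y ^ 2 * t ^ 2 - (x ^ 2 + y ^ 2 + 1) * t + 1) := by
  ring

theorem tendsto_poisson_ratio_atTop (x y : ℝ) :
    Tendsto (fun s : ℝ => (1 + s ^ 2) / ((s - x) ^ 2 + y ^ 2)) atTop (𝓝 1) := by
  have hcont : ContinuousAt (fun u : ℝ => (u ^ 2 + 1) / ((1 - x * u) ^ 2 + y ^ 2 * u ^ 2)) 0 := by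
    apply ContinuousAt.div <;> first | fun_prop | simp
  have hlim : Tendsto ((fun u : ℝ => (u ^ 2 + 1) / ((1 - x * u) ^ 2 + y ^ 2 * u ^ 2)) ∘
      fun s : ℝ => s⁻¹) atTop (𝓝 1) := by
    simpa using hcont.tendsto.comp tendsto_inv_atTop_zero
  refine hlim.congr' ?_
  filter_upwards [eventually_gt_atTop 0] with s hs
  simp only [Function.comp_apply]
  field_simp

section PoissonRatio

variable {x y : ℝ}

theorem poisson_ratio_lt (hy : 0 < y) (s : ℝ) {t : ℝ} (ht : 1 < t)
    (hq : 0 < y ^ 2 * t ^ 2 - (x ^ 2 + y ^ 2 + 1) * t + 1) :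
    (1 + s ^ 2) / ((s - x) ^ 2 + y ^ 2) < t := by
  rw [div_lt_iff₀ (by positivity)]
  have hprod : 0 < (t - 1) * (t * ((s - x) ^ 2 + y ^ 2) - (1 + s ^ 2)) := by
    rw [poisson_ratio_identity]
    positivity
  nlinarith [(pos_iff_pos_of_mul_pos hprod).mp (sub_pos.mpr ht)]

theorem poisson_ratio_eq_root (hy : 0 < y) {t : ℝ} (ht : 1 < t)
    (hq : y ^ 2 * t ^ 2 - (x ^ 2 + y ^ 2 + 1) * t + 1 = 0) :
    (1 + (t * x / (t - 1)) ^ 2) / ((t * x / (t - 1) - x) ^ 2 + y ^ 2) = t := by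
  have ht1 : t - 1 ≠ 0 := sub_ne_zero.mpr ht.ne'
  have hid := poisson_ratio_identity x y (t * x / (t - 1)) t
  rw [hq, mul_div_cancel₀ _ ht1, sub_self, add_zero, zero_pow two_ne_zero,
    mul_eq_zero_iff_left ht1, sub_eq_zero] at hid
  rw [← hid, mul_div_cancel_right₀ _ (by positivity)]

theorem one_le_of_poisson_root (hy : 0 < y) {t : ℝ}
    (hq : y ^ 2 * t ^ 2 - (x ^ 2 + y ^ 2 + 1) * t + 1 = 0)
    (hvertex : (x ^ 2 + y ^ 2 + 1) / (2 * y ^ 2) ≤ t) : 1 ≤ t := by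
  rw [div_le_iff₀ (by positivity)] at hvertex
  by_contra! ht
  nlinarith [sq_nonneg x, mul_pos (pow_pos hy 2) (sub_pos.mpr ht)]

theorem iSup_poisson_ratio_eq_root (hy : 0 < y) {t : ℝ}
    (hq : y ^ 2 * t ^ 2 - (x ^ 2 + y ^ 2 + 1) * t + 1 = 0)
    (hvertex : (x ^ 2 + y ^ 2 + 1) / (2 * y ^ 2) ≤ t) :
    ⨆ s : ℝ, (1 + s ^ 2) / ((s - x) ^ 2 + y ^ 2) = t := by
  have ht := one_le_of_poisson_root hy hq hvertex
  refine ciSup_eq_of_forall_le_of_forall_lt_exists_gt (fun s => ?_) (fun w hw => ?_)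
  · refine le_of_forall_gt_imp_ge_of_dense fun u hu => (poisson_ratio_lt hy s ?_ ?_).le
    · exact ht.trans_lt hu
    · exact quadratic_pos_of_root_lt (pow_pos hy 2) hq hvertex hu
  rcases ht.eq_or_lt with rfl | ht
  · exact ((tendsto_poisson_ratio_atTop x y).eventually (lt_mem_nhds hw)).exists
  · exact ⟨t * x / (t - 1), by rwa [poisson_ratio_eq_root hy ht hq]⟩

theorem le_one_add_of_poisson_root (hy : 0 < y) {t : ℝ} (ht : 0 < t)
    (hq : y ^ 2 * t ^ 2 - (x ^ 2 + y ^ 2 + 1) * t + 1 = 0) :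
    t ≤ 1 + (1 + x ^ 2) / y ^ 2 := by
  have hdiv : 1 + (1 + x ^ 2) / y ^ 2 = (x ^ 2 + y ^ 2 + 1) / y ^ 2 := by
    field_simp
    ring
  rw [hdiv, le_div_iff₀ (by positivity)]
  nlinarith

end PoissonRatio

theorem sup_poisson_kernel (x : ℝ) (y : ℝ) (hy : 0 < y) :
    (⨆ s : ℝ, (1 + s ^ 2) / ((s - x) ^ 2 + y ^ 2)) =
        (x ^ 2 + y ^ 2 + 1) / (2 * y ^ 2) +
          Real.sqrt (((x ^ 2 + y ^ 2 + 1) / (2 * y ^ 2)) ^ 2 - 1 / y ^ 2) ∧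
      (⨆ s : ℝ, (1 + s ^ 2) / ((s - x) ^ 2 + y ^ 2)) ≤ 1 + (1 + x ^ 2) / y ^ 2 := by
  set t := (x ^ 2 + y ^ 2 + 1) / (2 * y ^ 2) +
    Real.sqrt (((x ^ 2 + y ^ 2 + 1) / (2 * y ^ 2)) ^ 2 - 1 / y ^ 2) with ht
  have hdisc : 1 / y ^ 2 ≤ ((x ^ 2 + y ^ 2 + 1) / (2 * y ^ 2)) ^ 2 := by
    rw [div_pow, div_le_div_iff₀ (by positivity) (by positivity)]
    have hlin : 2 * y ≤ x ^ 2 + y ^ 2 + 1 := by nlinarith [sq_nonneg (y - 1), sq_nonneg x]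
    have hsq : (2 * y) ^ 2 ≤ (x ^ 2 + y ^ 2 + 1) ^ 2 := pow_le_pow_left₀ (by positivity) hlin 2
    nlinarith [mul_le_mul_of_nonneg_right hsq (sq_nonneg y)]
  have hq : y ^ 2 * t ^ 2 - (x ^ 2 + y ^ 2 + 1) * t + 1 = 0 :=
    quadratic_eq_zero_of_eq_add_sqrt (pow_pos hy 2) hdisc ht
  have hvertex : (x ^ 2 + y ^ 2 + 1) / (2 * y ^ 2) ≤ t := le_add_of_nonneg_right (Real.sqrt_nonneg _)
  have hsup := iSup_poisson_ratio_eq_root hy hq hvertex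
  rw [hsup]
  exact ⟨rfl, le_one_add_of_poisson_root hy (by linarith [one_le_of_poisson_root hy hq hvertex]) hq⟩
end

section
/- Let φ be holomorphic on ℂ₊, not a real constant, and suppose there is an open neighborhood U of ℝ ∪ {∞} in the Riemann sphere such that Im φ(z) ≥ 0 for all z ∈ U ∩ ℂ₊. Then Im φ(z) > 0 for all z ∈ ℂ₊, i.e., φ is an endofunction of ℂ₊. -/
/-!
Since `‖exp (I * w)‖ = exp (-w.im)`, the maximum modulus principle applied to `exp (I * φ)` on the
bounded region `{ε / 2 < Im z, ‖z‖ < R + 1}` carries `0 ≤ Im φ` from the neighbourhood of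
`ℝ ∪ {∞}` to the whole upper half-plane. A zero of `Im φ` is then an interior minimum of `Im φ`,
which the open mapping theorem allows only when `φ` is constant, and that constant is real.
-/

open Set Metric Complex Bornology Topology

lemma Complex.norm_exp_I_mul (w : ℂ) : ‖exp (I * w)‖ = Real.exp (-w.im) := by
  simp [norm_exp]

section
variable {E : Type*} [NormedAddCommGroup E] [NormedSpace ℂ E] {f : E → ℂ} {U : Set E}

theorem Complex.im_nonneg_of_forall_mem_frontier_im_nonneg [Nontrivial E] (hU : IsBounded U)
    (hd : DiffContOnCl ℂ f U) (hf : ∀ z ∈ frontier U, 0 ≤ (f z).im) {z : E}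
    (hz : z ∈ closure U) : 0 ≤ (f z).im := by
  have key : ‖exp (I * f z)‖ ≤ 1 :=
    norm_le_of_forall_mem_frontier_norm_le hU
      ((by fun_prop : Differentiable ℂ fun w : ℂ => exp (I * w)).comp_diffContOnCl hd)
      (fun w hw => by simpa [norm_exp_I_mul] using hf w hw) hz
  simpa [norm_exp_I_mul] using key

theorem AnalyticOnNhd.eqOn_of_isPreconnected_of_isMinOn_im {c : E} (hf : AnalyticOnNhd ℂ f U)
    (hc : IsPreconnected U) (ho : IsOpen U) (hcU : c ∈ U) (hm : IsMinOn (im ∘ f) U c) :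
    EqOn f (Function.const E (f c)) U := by
  rcases hf.is_constant_or_isOpen hc with ⟨w, hw⟩ | hopen
  · intro z hz
    simp [hw z hz, hw c hcU]
  · have hnhds : im '' (f '' U) ∈ 𝓝 (f c).im :=
      (isOpenMap_im _ (hopen U Subset.rfl ho)).mem_nhds ⟨f c, mem_image_of_mem f hcU, rfl⟩
    obtain ⟨_, hlt, ⟨_, ⟨z, hz, rfl⟩, rfl⟩⟩ := Filter.Eventually.exists_lt hnhds
    exact absurd (hm hz) (not_le.mpr hlt)

end

lemma frontier_setOf_lt_im_inter_ball_subset (a : ℝ) {r : ℝ} (hr : r ≠ 0) :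
    frontier ({w : ℂ | a < w.im} ∩ ball 0 r) ⊆ {w | w.im = a ∨ ‖w‖ = r} := by
  refine (frontier_inter_subset _ _).trans ?_
  rw [frontier_setOfPred_lt_im, frontier_ball _ hr]
  rintro w (⟨hw, -⟩ | ⟨-, hw⟩)
  · exact Or.inl hw
  · exact Or.inr (by simpa using hw)

theorem im_nonneg_of_im_nonneg_near_boundary {f : ℂ → ℂ} {ε R : ℝ}
    (hf : DifferentiableOn ℂ f {z : ℂ | 0 < z.im}) (hε : 0 < ε)
    (hb : ∀ z : ℂ, 0 < z.im → (z.im < ε ∨ R < ‖z‖) → 0 ≤ (f z).im) {z : ℂ} (hz : 0 < z.im) :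
    0 ≤ (f z).im := by
  by_cases hnear : z.im < ε ∨ R < ‖z‖
  · exact hb z hz hnear
  obtain ⟨hzε, hzR⟩ : ε ≤ z.im ∧ ‖z‖ ≤ R := by simpa only [not_or, not_lt] using hnear
  set V : Set ℂ := {w : ℂ | ε / 2 < w.im} ∩ ball 0 (R + 1)
  have hR : R + 1 ≠ 0 := by linarith [norm_nonneg z]
  have hclV : closure V ⊆ {w : ℂ | ε / 2 ≤ w.im} :=
    (closure_mono inter_subset_left).trans (closure_setOfPred_lt_im _).le
  refine im_nonneg_of_forall_mem_frontier_im_nonneg (isBounded_ball.subset inter_subset_right)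
    (hf.mono fun w hw => (half_pos hε).trans_le (hclV hw)).diffContOnCl (fun w hw => ?_)
    (subset_closure ⟨show ε / 2 < z.im by linarith, mem_ball_zero_iff.mpr (by linarith)⟩)
  have hw' : ε / 2 ≤ w.im := hclV (frontier_subset_closure hw)
  refine hb w (by linarith) ?_
  rcases frontier_setOf_lt_im_inter_ball_subset _ hR hw with h | h
  · exact Or.inl (by linarith)
  · exact Or.inr (by linarith)

theorem boundary_positivity (φ : ℂ → ℂ)
    (hφ : DifferentiableOn ℂ φ {z : ℂ | 0 < z.im})
    (hnc : ¬∃ r : ℝ, ∀ z : ℂ, 0 < z.im → φ z = (r : ℂ))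
    (hpos : ∃ ε > (0 : ℝ), ∃ R > (0 : ℝ), ∀ z : ℂ, 0 < z.im →
      (z.im < ε ∨ R < ‖z‖) → 0 ≤ (φ z).im) :
    ∀ z : ℂ, 0 < z.im → 0 < (φ z).im := by
  obtain ⟨ε, hε, R, -, hb⟩ := hpos
  have hU : IsOpen {z : ℂ | 0 < z.im} := isOpen_lt continuous_const continuous_im
  have hnonneg : ∀ z : ℂ, 0 < z.im → 0 ≤ (φ z).im := fun z hz =>
    im_nonneg_of_im_nonneg_near_boundary hφ hε hb hz
  intro z₀ hz₀
  refine (hnonneg z₀ hz₀).lt_of_ne fun h₀ => hnc ⟨(φ z₀).re, fun z hz => ?_⟩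
  have hconst := (hφ.analyticOnNhd hU).eqOn_of_isPreconnected_of_isMinOn_im
    (convex_halfSpace_im_gt 0).isPreconnected hU hz₀ fun z hz => by
      simpa [← h₀] using hnonneg z hz
  rw [hconst hz, Function.const_apply, Complex.ext_iff]
  simp [← h₀]
end
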